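/- arXiv:1204.6505 — 3 statements merged into one kernel-verified Lean document; each statement's English description precedes it below -/
import Mathlib

section
/- If P_1 ≪ P_0 and P_0 ≪ P_1 (the two measures are mutually absolutely continuous), then the marginally specified prior π_1 and the base prior π_0 are mutually absolutely continuous: π_1 ≪ π_0 and π_0 ≪ π_1. -/
open MeasureTheory ProbabilityTheory
open scoped ENNReal

lemma MeasureTheory.Measure.eq_comp_of_apply_eq_lintegral {F Θ : Type*} [MeasurableSpace F]
    [MeasurableSpace Θ] {μ : Measure F} {ν : Measure Θ} {κ : Kernel Θ F}
    (h : ∀ A, MeasurableSet A → μ A = ∫⁻ t, κ t A ∂ν) : μ = κ ∘ₘ ν := by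
  ext A hA
  rw [h A hA, Measure.bind_apply hA κ.aemeasurable]

theorem msp_mutual_absolute_continuity_general
    {F Θ : Type*} [MeasurableSpace F] [MeasurableSpace Θ]
    (π₀ : Measure F)
    (θ : F → Θ)
    (κ : Kernel Θ F)
    (hdis : ∀ (A : Set F) (B : Set Θ), MeasurableSet A → MeasurableSet B →
      π₀ (A ∩ θ ⁻¹' B) = ∫⁻ t in B, κ t A ∂(π₀.map θ))
    (P₁ : Measure Θ)
    (h₁₀ : P₁ ≪ π₀.map θ) (h₀₁ : π₀.map θ ≪ P₁) :
    P₁.bind κ ≪ π₀ ∧ π₀ ≪ P₁.bind κ := by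
  have hπ₀ : π₀ = κ ∘ₘ π₀.map θ := Measure.eq_comp_of_apply_eq_lintegral fun A hA => by
    simpa using hdis A Set.univ hA MeasurableSet.univ
  constructor
  · calc κ ∘ₘ P₁ ≪ κ ∘ₘ π₀.map θ := h₁₀.comp_right κ
      _ = π₀ := hπ₀.symm
  · calc π₀ = κ ∘ₘ π₀.map θ := hπ₀
      _ ≪ κ ∘ₘ P₁ := h₀₁.comp_right κ

/-- Corollary 1: if P₁ ≪ P₀ ≪ P₁ then π₁ ≪ π₀ ≪ π₁. -/
theorem msp_mutual_absolute_continuity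
    {F Θ : Type*} [MeasurableSpace F] [MeasurableSpace Θ]
    (π₀ : Measure F) [IsProbabilityMeasure π₀]
    (θ : F → Θ) (hθ : Measurable θ)
    (κ : Kernel Θ F) [IsMarkovKernel κ]
    (hdis : ∀ (A : Set F) (B : Set Θ), MeasurableSet A → MeasurableSet B →
      π₀ (A ∩ θ ⁻¹' B) = ∫⁻ t in B, κ t A ∂(π₀.map θ))
    (P₁ : Measure Θ) [IsProbabilityMeasure P₁]
    (h₁₀ : P₁ ≪ π₀.map θ) (h₀₁ : π₀.map θ ≪ P₁) :
    P₁.bind κ ≪ π₀ ∧ π₀ ≪ P₁.bind κ :=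
  msp_mutual_absolute_continuity_general π₀ θ κ hdis P₁ h₁₀ h₀₁
end

section
/- π_1 ≪ π_0 holds whenever P_1 ≪ P_0; i.e., for any measurable A with π_0(A) = 0, the marginally specified prior satisfies π_1(A) = 0. -/
open MeasureTheory ProbabilityTheory
open scoped ENNReal

theorem msp_absolutely_continuous_general
    {F Θ : Type*} [MeasurableSpace F] [MeasurableSpace Θ]
    (π₀ : Measure F)
    (θ : F → Θ)
    (κ : Kernel Θ F)
    (hdis : ∀ (A : Set F) (B : Set Θ), MeasurableSet A → MeasurableSet B →
      π₀ (A ∩ θ ⁻¹' B) = ∫⁻ t in B, κ t A ∂(π₀.map θ))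
    (P₁ : Measure Θ)
    (hac : P₁ ≪ π₀.map θ) :
    ∀ A : Set F, MeasurableSet A → π₀ A = 0 → P₁.bind κ A = 0 := by
  have hπ₀ : π₀ = κ ∘ₘ π₀.map θ := Measure.ext fun A hA => by
    simpa [Measure.bind_apply hA κ.aemeasurable] using hdis A Set.univ hA .univ
  intro A _ hA0
  exact hac.comp_right κ (hπ₀ ▸ hA0)

/-- π₁ ≪ π₀ whenever P₁ ≪ P₀. -/
theorem msp_absolutely_continuous
    {F Θ : Type*} [MeasurableSpace F] [MeasurableSpace Θ]
    (π₀ : Measure F) [IsProbabilityMeasure π₀]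
    (θ : F → Θ) (hθ : Measurable θ)
    (κ : Kernel Θ F) [IsMarkovKernel κ]
    (hdis : ∀ (A : Set F) (B : Set Θ), MeasurableSet A → MeasurableSet B →
      π₀ (A ∩ θ ⁻¹' B) = ∫⁻ t in B, κ t A ∂(π₀.map θ))
    (P₁ : Measure Θ) [IsProbabilityMeasure P₁]
    (hac : P₁ ≪ π₀.map θ) :
    ∀ A : Set F, MeasurableSet A → π₀ A = 0 → P₁.bind κ A = 0 :=
  msp_absolutely_continuous_general π₀ θ κ hdis P₁ hac
end

section
/- Two strictly positive two-way probability tables on {1,…,d_1} × {1,…,d_2} have equal local dependence functions LDF^{j1,j2}_{c1,c2} for all 1 ≤ c1 ≤ d_1 − 1, 1 ≤ c2 ≤ d_2 − 1 if and only if one table can be obtained from the other by multiplication by positive row and column factors followed by normalization. -/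
lemma ldf_aux {d₁ d₂ : ℕ} (r : Fin (d₁ + 1) → Fin (d₂ + 1) → ℝ)
    (hr : ∀ i j, 0 < r i j)
    (h : ∀ (c₁ : Fin d₁) (c₂ : Fin d₂),
      r c₁.castSucc c₂.castSucc * r c₁.succ c₂.succ
        = r c₁.castSucc c₂.succ * r c₁.succ c₂.castSucc) :
    ∀ i j, r i j * r 0 0 = r i 0 * r 0 j := by
  intro i
  induction i using Fin.induction with
  | zero => intro j; ring
  | succ i ih =>
    intro j
    induction j using Fin.induction with
    | zero => ring
    | succ j ihj =>
      have hA : r i.castSucc j.castSucc * r 0 0 ≠ 0 :=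
        (mul_pos (hr _ _) (hr _ _)).ne'
      apply mul_right_cancel₀ hA
      calc r i.succ j.succ * r 0 0 * (r i.castSucc j.castSucc * r 0 0)
          = (r i.castSucc j.castSucc * r i.succ j.succ) * (r 0 0 * r 0 0) := by ring
        _ = (r i.castSucc j.succ * r i.succ j.castSucc) * (r 0 0 * r 0 0) := by rw [h i j]
        _ = (r i.castSucc j.succ * r 0 0) * (r i.succ j.castSucc * r 0 0) := by ring
        _ = (r i.castSucc 0 * r 0 j.succ) * (r i.succ 0 * r 0 j.castSucc) := by
            rw [ih j.succ, ihj]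
        _ = (r i.succ 0 * r 0 j.succ) * (r i.castSucc 0 * r 0 j.castSucc) := by ring
        _ = (r i.succ 0 * r 0 j.succ) * (r i.castSucc j.castSucc * r 0 0) := by
            rw [ih j.castSucc]

/-- Two strictly positive two-way probability tables have equal local
dependence functions (adjacent log cross-product ratios) if and only if one is
obtained from the other by positive row and column scalings (with a
normalizing constant λ). -/
theorem ldf_equal_iff_row_column_scaling
    {d₁ d₂ : ℕ} (f g : Fin (d₁ + 1) → Fin (d₂ + 1) → ℝ)
    (hf : ∀ i j, 0 < f i j) (hg : ∀ i j, 0 < g i j)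
    (hfsum : ∑ i, ∑ j, f i j = 1) (hgsum : ∑ i, ∑ j, g i j = 1) :
    (∀ (c₁ : Fin d₁) (c₂ : Fin d₂),
        Real.log ((f c₁.castSucc c₂.castSucc * f c₁.succ c₂.succ) /
            (f c₁.castSucc c₂.succ * f c₁.succ c₂.castSucc))
          = Real.log ((g c₁.castSucc c₂.castSucc * g c₁.succ c₂.succ) /
              (g c₁.castSucc c₂.succ * g c₁.succ c₂.castSucc)))
      ↔ ∃ (lam : ℝ) (a : Fin (d₁ + 1) → ℝ) (b : Fin (d₂ + 1) → ℝ),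
          0 < lam ∧ (∀ i, 0 < a i) ∧ (∀ j, 0 < b j) ∧
            ∀ i j, g i j = lam * a i * b j * f i j := by
  constructor
  · intro h
    set r : Fin (d₁ + 1) → Fin (d₂ + 1) → ℝ := fun i j => g i j / f i j with hrdef
    have hrpos : ∀ i j, 0 < r i j := fun i j => div_pos (hg i j) (hf i j)
    have hcross : ∀ (c₁ : Fin d₁) (c₂ : Fin d₂),
        r c₁.castSucc c₂.castSucc * r c₁.succ c₂.succ
          = r c₁.castSucc c₂.succ * r c₁.succ c₂.castSucc := by
      intro c₁ c₂
      have hfp : 0 < (f c₁.castSucc c₂.castSucc * f c₁.succ c₂.succ) /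
          (f c₁.castSucc c₂.succ * f c₁.succ c₂.castSucc) := by
        have := hf c₁.castSucc c₂.castSucc
        have := hf c₁.succ c₂.succ
        have := hf c₁.castSucc c₂.succ
        have := hf c₁.succ c₂.castSucc
        positivity
      have hgp : 0 < (g c₁.castSucc c₂.castSucc * g c₁.succ c₂.succ) /
          (g c₁.castSucc c₂.succ * g c₁.succ c₂.castSucc) := by
        have := hg c₁.castSucc c₂.castSucc
        have := hg c₁.succ c₂.succ
        have := hg c₁.castSucc c₂.succ
        have := hg c₁.succ c₂.castSucc
        positivity
      have heq := congrArg Real.exp (h c₁ c₂)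
      rw [Real.exp_log hfp, Real.exp_log hgp] at heq
      have hf1 := (hf c₁.castSucc c₂.castSucc).ne'
      have hf2 := (hf c₁.succ c₂.succ).ne'
      have hf3 := (hf c₁.castSucc c₂.succ).ne'
      have hf4 := (hf c₁.succ c₂.castSucc).ne'
      have hg1 := (hg c₁.castSucc c₂.castSucc).ne'
      have hg2 := (hg c₁.succ c₂.succ).ne'
      have hg3 := (hg c₁.castSucc c₂.succ).ne'
      have hg4 := (hg c₁.succ c₂.castSucc).ne'
      simp only [hrdef]
      field_simp at heq ⊢
      linear_combination -heq
    have key := ldf_aux r hrpos hcross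
    refine ⟨(r 0 0)⁻¹, fun i => r i 0, fun j => r 0 j,
      inv_pos.mpr (hrpos 0 0), fun i => hrpos i 0, fun j => hrpos 0 j, ?_⟩
    intro i j
    have hk := key i j
    have h00 : r 0 0 ≠ 0 := (hrpos 0 0).ne'
    have hfij : f i j ≠ 0 := (hf i j).ne'
    have : r i j = (r 0 0)⁻¹ * r i 0 * r 0 j := by
      field_simp
      linarith [hk]
    calc g i j = r i j * f i j := by
          simp only [hrdef]; field_simp
      _ = (r 0 0)⁻¹ * r i 0 * r 0 j * f i j := by rw [this]
  · rintro ⟨lam, a, b, hlam, ha, hb, hgf⟩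
    intro c₁ c₂
    rw [hgf, hgf, hgf, hgf]
    congr 1
    have h1 := (hf c₁.castSucc c₂.succ).ne'
    have h2 := (hf c₁.succ c₂.castSucc).ne'
    have h3 := (ha c₁.castSucc).ne'
    have h4 := (ha c₁.succ).ne'
    have h5 := (hb c₂.castSucc).ne'
    have h6 := (hb c₂.succ).ne'
    have h7 := hlam.ne'
    field_simp
end
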